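/- arXiv:2203.13066 — 8 statements merged into one kernel-verified Lean document; each statement's English description precedes it below -/
import Mathlib

section
/- The minimum over real ω of max{|1 - ω/4|, |1 - 2ω|} equals 7/9, attained at ω = 8/9. -/
theorem stmt_1 :
    IsLeast (Set.range fun ω : ℝ => max |1 - ω / 4| |1 - 2 * ω|) (7 / 9) ∧
      max |1 - (8 / 9 : ℝ) / 4| |1 - 2 * (8 / 9 : ℝ)| = 7 / 9 := by
  have key : max |1 - (8 / 9 : ℝ) / 4| |1 - 2 * (8 / 9 : ℝ)| = 7 / 9 := by
    rw [show |1 - (8 / 9 : ℝ) / 4| = 7/9 by rw [abs_of_nonneg] <;> norm_num,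
      show |1 - 2 * (8 / 9 : ℝ)| = 7/9 by rw [abs_of_nonpos] <;> norm_num]
    norm_num
  refine ⟨⟨⟨8/9, key⟩, ?_⟩, key⟩
  rintro x ⟨ω, rfl⟩
  rcases le_or_gt ω (8/9) with h | h
  · refine le_max_of_le_left ?_
    calc (7/9 : ℝ) ≤ 1 - ω / 4 := by linarith
    _ ≤ |1 - ω / 4| := le_abs_self _
  · refine le_max_of_le_right ?_
    calc (7/9 : ℝ) ≤ -(1 - 2 * ω) := by linarith
    _ ≤ |1 - 2 * ω| := neg_le_abs _
end

section
/- The minimum over real ω of max{|1 - (2-√2)ω/4|, |1 - 2ω|} equals (6+√2)/(10-√2), attained at ω = 8/(10-√2). -/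
theorem stmt_2 :
    IsLeast (Set.range fun ω : ℝ =>
        max |1 - (2 - Real.sqrt 2) * ω / 4| |1 - 2 * ω|)
      ((6 + Real.sqrt 2) / (10 - Real.sqrt 2)) ∧
      max |1 - (2 - Real.sqrt 2) * (8 / (10 - Real.sqrt 2)) / 4|
          |1 - 2 * (8 / (10 - Real.sqrt 2))| =
        (6 + Real.sqrt 2) / (10 - Real.sqrt 2) := by
  have hs2 : Real.sqrt 2 ^ 2 = 2 := Real.sq_sqrt (by norm_num)
  have hs1 : 1 < Real.sqrt 2 := by nlinarith [Real.sqrt_nonneg 2]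
  have hs3 : Real.sqrt 2 < 2 := by nlinarith [Real.sqrt_nonneg 2]
  set s := Real.sqrt 2 with hsdef
  have h10 : (0:ℝ) < 10 - s := by linarith
  have hne : (10:ℝ) - s ≠ 0 := ne_of_gt h10
  have key : max |1 - (2 - s) * (8 / (10 - s)) / 4| |1 - 2 * (8 / (10 - s))|
      = (6 + s) / (10 - s) := by
    have e1 : 1 - (2 - s) * (8 / (10 - s)) / 4 = (6 + s) / (10 - s) := by
      field_simp; ring
    have e2 : 1 - 2 * (8 / (10 - s)) = -((6 + s) / (10 - s)) := by
      field_simp; ring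
    rw [e1, e2, abs_neg, abs_of_nonneg (by positivity)]
    exact max_self _
  refine ⟨⟨⟨8 / (10 - s), key⟩, ?_⟩, key⟩
  rintro x ⟨ω, rfl⟩
  have h1 : 1 - (2 - s) * ω / 4 ≤ max |1 - (2 - s) * ω / 4| |1 - 2 * ω| :=
    le_trans (le_abs_self _) (le_max_left _ _)
  have h2 : -(1 - 2 * ω) ≤ max |1 - (2 - s) * ω / 4| |1 - 2 * ω| :=
    le_trans (neg_le_abs _) (le_max_right _ _)
  rw [div_le_iff₀ h10]
  nlinarith [h1, h2, mul_le_mul_of_nonneg_left h2 (by linarith : (0:ℝ) ≤ 2 - s)]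
end

section
/- For the function ψ(η₁,η₂) = (2 - η₁ - η₂)/2 on the region D⁽⁴⁾ = ([-1,√2/2]×[√2/2,1]) ∪ ([-1,1]×[-1,√2/2]), the maximum value of ψ is 2 and the minimum value is (2-√2)/4, the latter attained at (1, √2/2). -/
theorem stmt_4 :
    let ψ : ℝ × ℝ → ℝ := fun p => (2 - p.1 - p.2) / 2
    let D : Set (ℝ × ℝ) :=
      (Set.Icc (-1) (Real.sqrt 2 / 2) ×ˢ Set.Icc (Real.sqrt 2 / 2) 1) ∪
        (Set.Icc (-1) 1 ×ˢ Set.Icc (-1) (Real.sqrt 2 / 2))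
    IsGreatest (ψ '' D) 2 ∧ IsLeast (ψ '' D) ((2 - Real.sqrt 2) / 4) ∧
      ((1, Real.sqrt 2 / 2) : ℝ × ℝ) ∈ D ∧
      ψ (1, Real.sqrt 2 / 2) = (2 - Real.sqrt 2) / 4 := by
  intro ψ D
  have h1 : (1:ℝ) ≤ Real.sqrt 2 := by
    nlinarith [Real.sq_sqrt (by norm_num : (2:ℝ) ≥ 0), Real.sqrt_nonneg 2]
  have h2 : Real.sqrt 2 ≤ 2 := by
    nlinarith [Real.sq_sqrt (by norm_num : (2:ℝ) ≥ 0), Real.sqrt_nonneg 2]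
  have hmem : ((1, Real.sqrt 2 / 2) : ℝ × ℝ) ∈ D := by
    right
    constructor
    · constructor <;> norm_num
    · constructor <;> linarith
  refine ⟨⟨⟨(-1, -1), ?_, by simp [ψ]; norm_num⟩, ?_⟩,
    ⟨⟨(1, Real.sqrt 2 / 2), hmem, by simp [ψ]; ring⟩, ?_⟩, hmem, by simp [ψ]; ring⟩
  · right; constructor <;> constructor <;> simp <;> linarith
  · rintro y ⟨p, hp, rfl⟩
    rcases hp with ⟨⟨ha, _⟩, ⟨hb, _⟩⟩ | ⟨⟨ha, _⟩, ⟨hb, _⟩⟩ <;> simp only [ψ] <;> linarith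
  · rintro y ⟨p, hp, rfl⟩
    rcases hp with ⟨⟨_, ha⟩, ⟨_, hb⟩⟩ | ⟨⟨_, ha⟩, ⟨_, hb⟩⟩ <;> simp only [ψ] <;> linarith
end

section
/- For the function Υ(η₁,η₂) = (2 - η₁ - η₂)(4 + 2η₁ + 2η₂ + η₁η₂) on the region D⁽⁴⁾ = ([-1,√2/2]×[√2/2,1]) ∪ ([-1,1]×[-1,√2/2]), the maximum value is 8 (attained at (0,0)) and the minimum value is (9 - 3√2)/2 (attained at (1, √2/2)). -/
private lemma ub_aux (x y : ℝ) (hx : -1 ≤ x) (hx1 : x ≤ 1) (hy : -1 ≤ y) (hy1 : y ≤ 1) :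
    (2 - x - y) * (4 + 2 * x + 2 * y + x * y) ≤ 8 := by
  nlinarith [sq_nonneg (x + y), sq_nonneg (x - y), sq_nonneg (x * y),
    mul_nonneg (mul_nonneg (sub_nonneg.2 hx1) (sub_nonneg.2 hy1)) (sub_nonneg.2 hx1),
    mul_nonneg (sub_nonneg.2 hx1) (sub_nonneg.2 hy1),
    mul_nonneg (by linarith : (0:ℝ) ≤ x + 1) (by linarith : (0:ℝ) ≤ y + 1)]

private lemma lb_aux (x y m : ℝ) (hm2 : m ^ 2 = 1 / 2) (hmh : 1 / 2 ≤ m) (hm1 : m ≤ 1)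
    (hx : -1 ≤ x) (hx1 : x ≤ 1) (hy : -1 ≤ y) (hym : y ≤ m) :
    9 / 2 - 3 * m ≤ (2 - x - y) * (4 + 2 * x + 2 * y + x * y) := by
  nlinarith [mul_nonneg (by linarith : (0:ℝ) ≤ 1 + x)
      (mul_nonneg (by linarith : (0:ℝ) ≤ m - y) (by linarith : (0:ℝ) ≤ 1 + m + y)),
    mul_nonneg (by linarith : (0:ℝ) ≤ 1 - x)
      (mul_nonneg (by linarith : (0:ℝ) ≤ 2 - y) (by linarith : (0:ℝ) ≤ 1 + y)),
    mul_nonneg (mul_nonneg (by linarith : (0:ℝ) ≤ 2 + y) (by linarith : (0:ℝ) ≤ 1 - x))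
      (by linarith : (0:ℝ) ≤ 1 + x),
    mul_nonneg (by linarith : (0:ℝ) ≤ 1 - x) (by linarith : (0:ℝ) ≤ 3 * m - 1 / 2)]

theorem stmt_7 :
    let Υ : ℝ × ℝ → ℝ := fun p =>
      (2 - p.1 - p.2) * (4 + 2 * p.1 + 2 * p.2 + p.1 * p.2)
    let D : Set (ℝ × ℝ) :=
      (Set.Icc (-1) (Real.sqrt 2 / 2) ×ˢ Set.Icc (Real.sqrt 2 / 2) 1) ∪
        (Set.Icc (-1) 1 ×ˢ Set.Icc (-1) (Real.sqrt 2 / 2))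
    IsGreatest (Υ '' D) 8 ∧ IsLeast (Υ '' D) ((9 - 3 * Real.sqrt 2) / 2) ∧
      ((0, 0) : ℝ × ℝ) ∈ D ∧ Υ (0, 0) = 8 ∧
      ((1, Real.sqrt 2 / 2) : ℝ × ℝ) ∈ D ∧
      Υ (1, Real.sqrt 2 / 2) = (9 - 3 * Real.sqrt 2) / 2 := by
  intro Υ D
  set m : ℝ := Real.sqrt 2 / 2 with hm
  have hs2 : Real.sqrt 2 ^ 2 = 2 := Real.sq_sqrt (by norm_num)
  have hs0 : (0:ℝ) ≤ Real.sqrt 2 := Real.sqrt_nonneg 2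
  have hm2 : m ^ 2 = 1 / 2 := by rw [hm, div_pow, hs2]; norm_num
  have hmh : 1 / 2 ≤ m := by nlinarith
  have hm1 : m ≤ 1 := by nlinarith
  have hKey : (9 - 3 * Real.sqrt 2) / 2 = 9 / 2 - 3 * m := by rw [hm]; ring
  have h00 : ((0, 0) : ℝ × ℝ) ∈ D := by
    refine Or.inr ⟨⟨by norm_num, by norm_num⟩, ⟨by norm_num, by linarith⟩⟩
  have h1m : ((1, m) : ℝ × ℝ) ∈ D := by
    refine Or.inr ⟨⟨by norm_num, le_refl 1⟩, ⟨by linarith, le_refl m⟩⟩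
  have hΥ00 : Υ (0, 0) = 8 := by simp [Υ]; norm_num
  have hΥ1m : Υ (1, m) = (9 - 3 * Real.sqrt 2) / 2 := by
    show (2 - 1 - m) * (4 + 2 * 1 + 2 * m + 1 * m) = (9 - 3 * Real.sqrt 2) / 2
    rw [hKey]; nlinarith [hm2]
  have hub : ∀ v ∈ Υ '' D, v ≤ 8 := by
    rintro v ⟨⟨x, y⟩, hmem, rfl⟩
    rcases hmem with ⟨⟨hx, hx1⟩, ⟨hy, hy1⟩⟩ | ⟨⟨hx, hx1⟩, ⟨hy, hy1⟩⟩
    · exact ub_aux x y hx (by linarith) (by linarith) hy1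
    · exact ub_aux x y hx hx1 hy (by linarith)
  have hlb : ∀ v ∈ Υ '' D, (9 - 3 * Real.sqrt 2) / 2 ≤ v := by
    rintro v ⟨⟨x, y⟩, hmem, rfl⟩
    rw [hKey]
    rcases hmem with ⟨⟨hx, hx1⟩, ⟨hy, hy1⟩⟩ | ⟨⟨hx, hx1⟩, ⟨hy, hy1⟩⟩
    · have h := lb_aux y x m hm2 hmh hm1 (by linarith) hy1 hx hx1
      show 9 / 2 - 3 * m ≤ (2 - x - y) * (4 + 2 * x + 2 * y + x * y)
      nlinarith [h]
    · exact lb_aux x y m hm2 hmh hm1 hx hx1 hy hy1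
  exact ⟨⟨⟨(0, 0), h00, hΥ00⟩, hub⟩, ⟨⟨(1, m), h1m, hΥ1m⟩, hlb⟩, h00, hΥ00, h1m, hΥ1m⟩
end

section
/- The minimum over real ω of max{|1 - ((3-√2)/3)ω|, |1 - (16/9)ω|} equals (7 + 3√2)/(25 - 3√2), attained at ω = 18/(25 - 3√2). -/
theorem stmt_10 :
    IsLeast (Set.range fun ω : ℝ =>
        max |1 - ((3 - Real.sqrt 2) / 3) * ω| |1 - (16 / 9) * ω|)
      ((7 + 3 * Real.sqrt 2) / (25 - 3 * Real.sqrt 2)) ∧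
      max |1 - ((3 - Real.sqrt 2) / 3) * (18 / (25 - 3 * Real.sqrt 2))|
          |1 - (16 / 9) * (18 / (25 - 3 * Real.sqrt 2))| =
        (7 + 3 * Real.sqrt 2) / (25 - 3 * Real.sqrt 2) := by
  have hs : Real.sqrt 2 ^ 2 = 2 := Real.sq_sqrt (by norm_num)
  have hs0 : 0 ≤ Real.sqrt 2 := Real.sqrt_nonneg 2
  have hslt : Real.sqrt 2 < 2 := by nlinarith
  have hden : (0:ℝ) < 25 - 3 * Real.sqrt 2 := by nlinarith
  set s := Real.sqrt 2 with hsdef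
  set m := (7 + 3 * s) / (25 - 3 * s) with hmdef
  have hm0 : 0 ≤ m := by
    apply div_nonneg <;> nlinarith
  have heq1 : 1 - ((3 - s) / 3) * (18 / (25 - 3 * s)) = m := by
    rw [hmdef]; field_simp; ring
  have heq2 : 1 - (16 / 9 : ℝ) * (18 / (25 - 3 * s)) = -m := by
    rw [hmdef]; field_simp; ring
  have hmax : max |1 - ((3 - s) / 3) * (18 / (25 - 3 * s))|
      |1 - (16 / 9 : ℝ) * (18 / (25 - 3 * s))| = m := by
    rw [heq1, heq2, abs_of_nonneg hm0, abs_neg, abs_of_nonneg hm0, max_self]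
  refine ⟨⟨⟨18 / (25 - 3 * s), hmax⟩, ?_⟩, hmax⟩
  rintro y ⟨ω, rfl⟩
  simp only
  by_cases h : ω ≤ 18 / (25 - 3 * s)
  · refine le_max_of_le_left (le_trans ?_ (le_abs_self _))
    rw [← heq1]
    have ha : 0 ≤ (3 - s) / 3 := by nlinarith
    nlinarith [mul_le_mul_of_nonneg_left h ha]
  · push_neg at h
    refine le_max_of_le_right ?_
    have : 1 - (16 / 9 : ℝ) * ω ≤ -m := by
      rw [← heq2]; nlinarith
    calc m ≤ -(1 - (16 / 9 : ℝ) * ω) := by linarith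
      _ ≤ |1 - (16 / 9 : ℝ) * ω| := neg_le_abs _
end

section
/- For 0 ≤ γ ≤ √6, the function μ(γ) = (1/5)·√((9+γ²)/(1+γ²)) satisfies √(3/35) ≤ μ(γ) ≤ 3/5, with μ(√6) = √(3/35) and μ(0) = 3/5, and μ is monotonically decreasing on [0, √6]. -/
private lemma inner_lt {a b : ℝ} (ha : 0 ≤ a) (hab : a < b) :
    (9 + b ^ 2) / (1 + b ^ 2) < (9 + a ^ 2) / (1 + a ^ 2) := by
  rw [div_lt_div_iff₀ (by positivity) (by positivity)]
  nlinarith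

private lemma mu_anti {a b : ℝ} (ha : 0 ≤ a) (hab : a < b) :
    (1 / 5 : ℝ) * Real.sqrt ((9 + b ^ 2) / (1 + b ^ 2)) <
      (1 / 5) * Real.sqrt ((9 + a ^ 2) / (1 + a ^ 2)) := by
  have h := inner_lt ha hab
  have h0 : (0:ℝ) ≤ (9 + b ^ 2) / (1 + b ^ 2) := by positivity
  have := Real.sqrt_lt_sqrt h0 h
  linarith

theorem stmt_15 :
    let μ : ℝ → ℝ := fun γ => (1 / 5) * Real.sqrt ((9 + γ ^ 2) / (1 + γ ^ 2))
    (∀ γ ∈ Set.Icc (0 : ℝ) (Real.sqrt 6),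
      Real.sqrt (3 / 35) ≤ μ γ ∧ μ γ ≤ 3 / 5) ∧
    μ (Real.sqrt 6) = Real.sqrt (3 / 35) ∧ μ 0 = 3 / 5 ∧
    StrictAntiOn μ (Set.Icc (0 : ℝ) (Real.sqrt 6)) := by
  intro μ
  have h6 : Real.sqrt 6 ^ 2 = 6 := Real.sq_sqrt (by norm_num)
  have hend : μ (Real.sqrt 6) = Real.sqrt (3 / 35) := by
    show (1/5 : ℝ) * Real.sqrt ((9 + Real.sqrt 6 ^ 2) / (1 + Real.sqrt 6 ^ 2)) = _
    rw [h6, show (9+6:ℝ)/(1+6) = 15/7 by norm_num,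
      show (3:ℝ)/35 = (1/5)^2 * (15/7) by norm_num,
      Real.sqrt_mul (by positivity), Real.sqrt_sq (by norm_num)]
  have h0 : μ 0 = 3 / 5 := by
    show (1/5 : ℝ) * Real.sqrt ((9 + 0 ^ 2) / (1 + 0 ^ 2)) = 3 / 5
    rw [show (9+0^2:ℝ)/(1+0^2) = 3^2 by norm_num, Real.sqrt_sq (by norm_num)]
    norm_num
  have hle : ∀ a b : ℝ, 0 ≤ a → a ≤ b → μ b ≤ μ a := by
    intro a b ha hab
    rcases eq_or_lt_of_le hab with rfl | h
    · exact le_rfl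
    · exact le_of_lt (mu_anti ha h)
  refine ⟨?_, hend, h0, ?_⟩
  · intro γ hγ
    constructor
    · rw [← hend]; exact hle γ (Real.sqrt 6) hγ.1 hγ.2
    · rw [← h0]; exact hle 0 γ le_rfl hγ.1
  · intro a ha b hb hab
    exact mu_anti ha.1 hab
end

section
/- Let γ ≥ 0, τ₁, τ₂ with 0 < τ₁ < 1 < τ₂, τ₀ = 2/(τ₁+τ₂) ≤ 1, and for ω ∈ ℝ define ζ₁(ω) = √((1-τ₂ω)² + (1-ω)²γ²)/√(1+γ²) and ζ₂(ω) = √((1-τ₁ω)² + (1-ω)²γ²)/√(1+γ²). Then min over ω ∈ ℝ of max{ζ₁(ω), ζ₂(ω)} equals min over ω ∈ [τ₀, ∞) of ζ₁(ω). -/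
/-!
Write `τ₀ = 2 / (τ₁ + τ₂)`. Since `(1 - τ₂ ω)² - (1 - τ₁ ω)² = (τ₂ - τ₁) ω ((τ₁ + τ₂) ω - 2)`,
the two moduli agree at `τ₀` and `ζ₂ ≤ ζ₁` on `[τ₀, ∞)`, so there the maximum is `ζ₁`.
On `(-∞, τ₀]` both `1 - τ₁ ω` and `1 - ω` stay nonnegative (as `τ₁ τ₀ ≤ 1` and `τ₀ ≤ 1`),
so `ζ₂` decreases there and the maximum never drops below `ζ₂ τ₀ = ζ₁ τ₀`.
-/

open Set

section InfOfMax

variable {α β : Type*} [LinearOrder α] [ConditionallyCompleteLinearOrder β]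

theorem csInf_range_max_eq_csInf_image_Ici (f g : α → β) (c : α) (hf : BddBelow (range f))
    (hgf : ∀ x, c ≤ x → g x ≤ f x) (hfg : ∀ x, x ≤ c → f c ≤ g x) :
    sInf (range fun x => max (f x) (g x)) = sInf (f '' Ici c) := by
  have hmax : BddBelow (range fun x => max (f x) (g x)) := by
    obtain ⟨b, hb⟩ := hf
    exact ⟨b, by rintro _ ⟨x, rfl⟩; exact (hb ⟨x, rfl⟩).trans (le_max_left _ _)⟩
  have himage : BddBelow (f '' Ici c) := hf.mono (image_subset_range _ _)
  apply le_antisymm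
  · refine le_csInf ⟨f c, c, self_mem_Ici, rfl⟩ ?_
    rintro _ ⟨x, hx, rfl⟩
    calc sInf (range fun x => max (f x) (g x)) ≤ max (f x) (g x) := csInf_le hmax ⟨x, rfl⟩
      _ = f x := max_eq_left (hgf x hx)
  · refine le_csInf ⟨_, c, rfl⟩ ?_
    rintro _ ⟨x, rfl⟩
    rcases le_total c x with hx | hx
    · exact (csInf_le himage ⟨x, hx, rfl⟩).trans (le_max_left _ _)
    · exact (csInf_le himage ⟨c, self_mem_Ici, rfl⟩).trans ((hfg x hx).trans (le_max_right _ _))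

end InfOfMax

noncomputable def relaxModulus (τ γ ω : ℝ) : ℝ :=
  √((1 - τ * ω) ^ 2 + (1 - ω) ^ 2 * γ ^ 2) / √(1 + γ ^ 2)

namespace relaxModulus

variable {τ τ' γ ω ω' : ℝ}

theorem nonneg : 0 ≤ relaxModulus τ γ ω := by
  unfold relaxModulus; positivity

theorem le_of_sq_le
    (h : (1 - τ * ω) ^ 2 + (1 - ω) ^ 2 * γ ^ 2 ≤ (1 - τ' * ω') ^ 2 + (1 - ω') ^ 2 * γ ^ 2) :
    relaxModulus τ γ ω ≤ relaxModulus τ' γ ω' :=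
  div_le_div_of_nonneg_right (Real.sqrt_le_sqrt h) (Real.sqrt_nonneg _)

theorem eq_of_add_mul_eq_two (h : (τ + τ') * ω = 2) :
    relaxModulus τ γ ω = relaxModulus τ' γ ω := by
  have : 1 - τ * ω = -(1 - τ' * ω) := by linarith
  rw [relaxModulus, relaxModulus, this, neg_sq]

theorem le_of_two_le_add_mul (hτ : τ ≤ τ') (hω : 0 ≤ ω) (h : 2 ≤ (τ + τ') * ω) :
    relaxModulus τ γ ω ≤ relaxModulus τ' γ ω := by
  apply le_of_sq_le
  have : 0 ≤ (τ' - τ) * ω * ((τ + τ') * ω - 2) :=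
    mul_nonneg (mul_nonneg (sub_nonneg.2 hτ) hω) (sub_nonneg.2 h)
  nlinarith

theorem antitoneOn_Iic (hτ : 0 ≤ τ) (hτω : τ * ω' ≤ 1) (hω : ω' ≤ 1) :
    AntitoneOn (relaxModulus τ γ) (Iic ω') := by
  intro x hx y hy hxy
  apply le_of_sq_le
  have h₁ : 0 ≤ 1 - τ * y := by nlinarith [mem_Iic.1 hy]
  have h₂ : 0 ≤ 1 - y := by linarith [mem_Iic.1 hy]
  have e₁ : (1 - τ * y) ^ 2 ≤ (1 - τ * x) ^ 2 := pow_le_pow_left₀ h₁ (by nlinarith) 2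
  have e₂ : (1 - y) ^ 2 ≤ (1 - x) ^ 2 := pow_le_pow_left₀ h₂ (by linarith) 2
  nlinarith [sq_nonneg γ]

end relaxModulus

theorem stmt_17_general (γ τ₁ τ₂ : ℝ)
    (h₁ : 0 < τ₁) (h₂ : τ₁ < 1) (h₃ : 1 < τ₂)
    (h₀ : 2 / (τ₁ + τ₂) ≤ 1) :
    let ζ₁ : ℝ → ℝ := fun ω =>
      Real.sqrt ((1 - τ₂ * ω) ^ 2 + (1 - ω) ^ 2 * γ ^ 2) / Real.sqrt (1 + γ ^ 2)
    let ζ₂ : ℝ → ℝ := fun ω =>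
      Real.sqrt ((1 - τ₁ * ω) ^ 2 + (1 - ω) ^ 2 * γ ^ 2) / Real.sqrt (1 + γ ^ 2)
    sInf (Set.range fun ω => max (ζ₁ ω) (ζ₂ ω)) =
      sInf (ζ₁ '' Set.Ici (2 / (τ₁ + τ₂))) := by
  intro ζ₁ ζ₂
  set τ₀ := 2 / (τ₁ + τ₂)
  have hτ₀ : (τ₁ + τ₂) * τ₀ = 2 := mul_div_cancel₀ _ (by linarith)
  have hτ₀_pos : 0 < τ₀ := by positivity
  refine csInf_range_max_eq_csInf_image_Ici (relaxModulus τ₂ γ) (relaxModulus τ₁ γ) τ₀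
    ⟨0, by rintro _ ⟨ω, rfl⟩; exact relaxModulus.nonneg⟩ (fun ω hω => ?_) (fun ω hω => ?_)
  · exact relaxModulus.le_of_two_le_add_mul (by linarith) (hτ₀_pos.le.trans hω)
      (hτ₀ ▸ mul_le_mul_of_nonneg_left hω (by linarith))
  · rw [relaxModulus.eq_of_add_mul_eq_two (by linarith : (τ₂ + τ₁) * τ₀ = 2)]
    exact relaxModulus.antitoneOn_Iic h₁.le (by nlinarith) h₀ hω self_mem_Iic hω

theorem stmt_17 (γ τ₁ τ₂ : ℝ) (hγ : 0 ≤ γ)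
    (h₁ : 0 < τ₁) (h₂ : τ₁ < 1) (h₃ : 1 < τ₂)
    (h₀ : 2 / (τ₁ + τ₂) ≤ 1) :
    let ζ₁ : ℝ → ℝ := fun ω =>
      Real.sqrt ((1 - τ₂ * ω) ^ 2 + (1 - ω) ^ 2 * γ ^ 2) / Real.sqrt (1 + γ ^ 2)
    let ζ₂ : ℝ → ℝ := fun ω =>
      Real.sqrt ((1 - τ₁ * ω) ^ 2 + (1 - ω) ^ 2 * γ ^ 2) / Real.sqrt (1 + γ ^ 2)
    sInf (Set.range fun ω => max (ζ₁ ω) (ζ₂ ω)) =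
      sInf (ζ₁ '' Set.Ici (2 / (τ₁ + τ₂))) :=
  stmt_17_general γ τ₁ τ₂ h₁ h₂ h₃ h₀
end

section
/- Let a, b > 0, α > 0, and let A = [[a, -1/α],[1, a]] and B = [[b, -1/α],[1, a]] be 2×2 complex matrices. Then the eigenvalues of B⁻¹A are λ₁ = 1 and λ₂ = (1 + α a²)/(1 + α a b), and both are real. -/
/-!
Write `c = 1/α`. Since `det B = a b + c > 0`, `μ` is an eigenvalue of `B⁻¹ A` exactly when
`μ B - A` is singular, and `det (μ B - A) = (μ - 1) (a (μ b - a) + c (μ - 1))`, whose roots are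
`1` and `(a² + c) / (a b + c) = (1 + α a²) / (1 + α a b)`.
-/

open Matrix

theorem Matrix.mem_spectrum_inv_mul_iff_det_eq_zero {n K : Type*} [Fintype n] [DecidableEq n]
    [Field K] {A B : Matrix n n K} (hB : IsUnit B.det) (μ : K) :
    μ ∈ spectrum K (B⁻¹ * A) ↔ (μ • B - A).det = 0 := by
  have hfactor : algebraMap K (Matrix n n K) μ - B⁻¹ * A = B⁻¹ * (μ • B - A) := by
    rw [mul_sub, mul_smul_comm, nonsing_inv_mul B hB, Algebra.algebraMap_eq_smul_one]
  rw [spectrum.mem_iff, hfactor,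
    (isUnit_nonsing_inv_iff.2 ((isUnit_iff_isUnit_det B).2 hB)).mul_left_iff,
    isUnit_iff_isUnit_det, isUnit_iff_ne_zero, not_not]

theorem det_smul_sub_eq_factor {K : Type*} [Field K] (a b c μ : K) :
    (μ • !![b, -c; 1, a] - !![a, -c; 1, a]).det = (μ - 1) * (a * (μ * b - a) + c * (μ - 1)) := by
  simp only [det_fin_two, Matrix.sub_apply, Matrix.smul_apply, of_apply, cons_val', cons_val_zero,
    cons_val_one, cons_val_fin_one, smul_eq_mul]
  ring

theorem spectrum_inv_mul_fin_two {K : Type*} [Field K] {a b c : K} (h : a * b + c ≠ 0) :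
    spectrum K ((!![b, -c; 1, a] : Matrix (Fin 2) (Fin 2) K)⁻¹ * !![a, -c; 1, a]) =
      {1, (a ^ 2 + c) / (a * b + c)} := by
  have hdet : IsUnit (!![b, -c; 1, a] : Matrix (Fin 2) (Fin 2) K).det := by
    rw [det_fin_two_of, isUnit_iff_ne_zero]
    convert h using 1
    ring
  ext μ
  rw [mem_spectrum_inv_mul_iff_det_eq_zero hdet, det_smul_sub_eq_factor, mul_eq_zero, sub_eq_zero,
    Set.mem_insert_iff, Set.mem_singleton_iff, eq_div_iff h]
  exact or_congr Iff.rfl ⟨fun h' => by linear_combination h', fun h' => by linear_combination h'⟩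

theorem stmt_18 (a b α : ℝ) (ha : 0 < a) (hb : 0 < b) (hα : 0 < α)
    (A B : Matrix (Fin 2) (Fin 2) ℂ)
    (hA : A = !![(a : ℂ), -(1 / (α : ℂ)); 1, (a : ℂ)])
    (hB : B = !![(b : ℂ), -(1 / (α : ℂ)); 1, (a : ℂ)]) :
    spectrum ℂ (B⁻¹ * A) =
      {(1 : ℂ), (((1 + α * a ^ 2) / (1 + α * a * b) : ℝ) : ℂ)} := by
  have hα' : (α : ℂ) ≠ 0 := by exact_mod_cast hα.ne'
  have hne : (a : ℂ) * b + 1 / α ≠ 0 := by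
    exact_mod_cast (by positivity : 0 < a * b + 1 / α).ne'
  rw [hA, hB, spectrum_inv_mul_fin_two hne]
  congr 2
  push_cast
  rw [← mul_div_mul_left _ _ hα']
  congr 1 <;> field_simp <;> ring
end
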